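/- Let μ be a trigonometric polynomial with coefficient support Λ, let Λ' ⊂ ℤ² be a finite set with Λ ⊆ Λ', and set R = |Λ' ⊖ Λ|. Suppose γ₁, …, γ_R are trigonometric polynomials with coefficient supports contained in Λ' ⊖ Λ such that the products μγ₁, …, μγ_R are orthonormal in L²([0,1]²), i.e., ∫_{[0,1]²} μ(r)γ_i(r) · conj(μ(r)γ_j(r)) dr = δ_{ij}. Then the set {r ∈ [0,1]² : μ(r) ≠ 0 and γ_i(r) = 0 for all i = 1,…,R} is finite. -/

import Mathlib

/-!
Orthonormality of the products `μ γᵢ` makes the `γᵢ` linearly independent. They lie in the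
`|Λ' ⊖ Λ|`-dimensional span of the exponentials `e2 k`, `k ∈ Λ' ⊖ Λ`, and there are exactly that
many of them, so they span it. If `μ` does not vanish somewhere, `Λ` is nonempty, so `Λ ⊆ Λ'` gives
`0 ∈ Λ' ⊖ Λ` and the constant `1` is a linear combination of the `γᵢ`. Hence they have no common
zero where `μ ≠ 0`, and the set in question is empty.
-/

open MeasureTheory Set
open scoped Pointwise

noncomputable section

/-- The unit square `[0,1]²`. -/
def box : Set (ℝ × ℝ) := Set.Icc (0:ℝ) 1 ×ˢ Set.Icc (0:ℝ) 1

/-- The complex exponential `e^{2πi k·r}` with integer frequency `k`. -/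
def e2 (k : ℤ × ℤ) (r : ℝ × ℝ) : ℂ :=
  Complex.exp (2 * Real.pi * Complex.I * ((k.1 : ℂ) * (r.1 : ℂ) + (k.2 : ℂ) * (r.2 : ℂ)))

/-- The trigonometric sum with coefficient support `Λ` and coefficients `c`. -/
def trigSum (Λ : Finset (ℤ × ℤ)) (c : ℤ × ℤ → ℂ) : (ℝ × ℝ) → ℂ :=
  fun r => ∑ k ∈ Λ, c k * e2 k r

/-- The Fourier coefficient `f̂[m] = ∫_{[0,1]²} f(r) e^{-2πi m·r} dr`. -/
def fourierCoeff2 (f : ℝ × ℝ → ℂ) (m : ℤ × ℤ) : ℂ :=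
  ∫ r in box, f r * Complex.exp (-(2 * Real.pi * Complex.I *
    ((m.1 : ℂ) * (r.1 : ℂ) + (m.2 : ℂ) * (r.2 : ℂ))))

/-- `d` (supported on `Λ`) satisfies the annihilation equation for `f` at `ℓ`:
`∑_{k ∈ Λ} d[k] ⋅ 2πi (ℓ-k)_x ⋅ f̂[ℓ-k] = 0` and likewise for the `y`-component. -/
def Annihilates (Λ : Finset (ℤ × ℤ)) (d : ℤ × ℤ → ℂ) (f : ℝ × ℝ → ℂ) (ℓ : ℤ × ℤ) : Prop :=
  (∑ k ∈ Λ, d k * (2 * Real.pi * Complex.I * (((ℓ - k).1 : ℂ))) * fourierCoeff2 f (ℓ - k)) = 0 ∧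
  (∑ k ∈ Λ, d k * (2 * Real.pi * Complex.I * (((ℓ - k).2 : ℂ))) * fourierCoeff2 f (ℓ - k)) = 0

/-- `μ` is a (integer-frequency) trigonometric polynomial: a nonzero finite sum
`∑_{k ∈ Λ} c[k] e^{2πi k·r}`. -/
def IsTrigPolyFn (μ : ℝ × ℝ → ℂ) : Prop :=
  (∃ (Λ : Finset (ℤ × ℤ)) (c : ℤ × ℤ → ℂ), μ = trigSum Λ c) ∧ μ ≠ 0

/-- The zero set of `μ` in `[0,1]²`. -/
def zeroSetOn (μ : ℝ × ℝ → ℂ) : Set (ℝ × ℝ) := {r | r ∈ box ∧ μ r = 0}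

/-- `γ` divides `μ` among trigonometric polynomials. -/
def TrigDivides (γ μ : ℝ × ℝ → ℂ) : Prop :=
  ∃ η : ℝ × ℝ → ℂ, IsTrigPolyFn η ∧ μ = fun r => γ r * η r

/-- `C` is a trigonometric curve: the zero set in `[0,1]²` of a trigonometric polynomial,
infinite and with no isolated points. -/
def IsTrigCurve (C : Set (ℝ × ℝ)) : Prop :=
  (∃ μ : ℝ × ℝ → ℂ, IsTrigPolyFn μ ∧ C = zeroSetOn μ) ∧ C.Infinite ∧
    ∀ x ∈ C, AccPt x (Filter.principal C)

/-- `μ` is a minimal polynomial of the trigonometric curve `C`: a real-valued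
trigonometric polynomial whose zero set in `[0,1]²` is `C` and which divides every
trigonometric polynomial vanishing on `C`. -/
def IsMinPoly (μ : ℝ × ℝ → ℂ) (C : Set (ℝ × ℝ)) : Prop :=
  IsTrigPolyFn μ ∧ (∀ r, (μ r).im = 0) ∧ C = zeroSetOn μ ∧
    ∀ ν : ℝ × ℝ → ℂ, IsTrigPolyFn ν → (∀ r ∈ C, ν r = 0) → TrigDivides μ ν

/-- The contraction `Λ' ⊖ Λ = {ℓ : ℓ + k ∈ Λ' for all k ∈ Λ}` (as a finset; for
nonempty `Λ` this agrees with the set-theoretic contraction). -/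
def shrink (Λ' Λ : Finset (ℤ × ℤ)) : Finset (ℤ × ℤ) :=
  (Λ' - Λ).filter fun ℓ => ∀ k ∈ Λ, ℓ + k ∈ Λ'

lemma continuous_e2 (k : ℤ × ℤ) : Continuous (e2 k) := by
  unfold e2
  fun_prop

lemma e2_zero (r : ℝ × ℝ) : e2 0 r = 1 := by
  simp [e2]

lemma continuous_trigSum (Λ : Finset (ℤ × ℤ)) (c : ℤ × ℤ → ℂ) : Continuous (trigSum Λ c) :=
  continuous_finsetSum _ fun k _ => continuous_const.mul (continuous_e2 k)

lemma trigSum_empty (c : ℤ × ℤ → ℂ) : trigSum ∅ c = 0 := by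
  funext r
  simp [trigSum]

lemma isCompact_box : IsCompact box :=
  isCompact_Icc.prod isCompact_Icc

lemma zero_mem_shrink {Λ Λ' : Finset (ℤ × ℤ)} (hΛ : Λ ⊆ Λ') (hne : Λ.Nonempty) :
    (0 : ℤ × ℤ) ∈ shrink Λ' Λ := by
  obtain ⟨k, hk⟩ := hne
  refine Finset.mem_filter.2 ⟨Finset.mem_sub.2 ⟨k, hΛ hk, k, hk, sub_self k⟩, fun k' hk' => ?_⟩
  simpa using hΛ hk'

lemma trigSum_eq_linearCombination (Λ : Finset (ℤ × ℤ)) (c : ℤ × ℤ → ℂ) :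
    trigSum Λ c = Fintype.linearCombination ℂ (fun k : Λ => e2 k) (fun k => c k) := by
  funext r
  simp only [trigSum, Fintype.linearCombination_apply, Finset.sum_apply, Pi.smul_apply,
    smul_eq_mul]
  exact (Finset.sum_coe_sort Λ fun k => c k * e2 k r).symm

lemma linearIndependent_of_integral_mul_conj_eq_ite {X ι : Type*} [MeasurableSpace X]
    {ν : Measure X} [Fintype ι] [DecidableEq ι] {g : ι → X → ℂ}
    (hint : ∀ i j, Integrable (fun x => g i x * starRingEnd ℂ (g j x)) ν)
    (horth : ∀ i j, ∫ x, g i x * starRingEnd ℂ (g j x) ∂ν = if i = j then 1 else 0) :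
    LinearIndependent ℂ g := by
  rw [Fintype.linearIndependent_iff]
  intro a ha j
  have hpoint : ∀ x, ∑ i, a i * (g i x * starRingEnd ℂ (g j x)) = 0 := fun x => by
    have hx := congrFun ha x
    simp only [Finset.sum_apply, Pi.smul_apply, smul_eq_mul, Pi.zero_apply] at hx
    simp only [← mul_assoc, ← Finset.sum_mul, hx, zero_mul]
  calc a j = ∑ i, a i * (if i = j then 1 else 0) := by simp
    _ = ∫ x, ∑ i, a i * (g i x * starRingEnd ℂ (g j x)) ∂ν := by
        rw [integral_finsetSum _ fun i _ => (hint i j).const_mul (a i)]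
        simp only [integral_const_mul, horth]
    _ = 0 := by simp only [hpoint, integral_zero]

lemma e2_mem_span_of_linearIndependent {ι : Type*} [Fintype ι] {S : Finset (ℤ × ℤ)}
    {cγ : ι → ℤ × ℤ → ℂ} {γ : ι → ℝ × ℝ → ℂ} (hγrep : ∀ i, γ i = trigSum S (cγ i))
    (hcard : Fintype.card ι = S.card) (hli : LinearIndependent ℂ γ) {k : ℤ × ℤ} (hk : k ∈ S) :
    e2 k ∈ Submodule.span ℂ (range γ) := by
  classical
  set L := Fintype.linearCombination ℂ (fun k : S => e2 k)
  set v : ι → S → ℂ := fun i k => cγ i k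
  have hγ : ⇑L ∘ v = γ := funext fun i => (hγrep i ▸ trigSum_eq_linearCombination S (cγ i)).symm
  have hspan : Submodule.span ℂ (range v) = ⊤ :=
    (LinearIndependent.of_comp L (hγ ▸ hli)).span_eq_top_of_card_eq_finrank'
      (by simp [hcard])
  have hmap := congrArg (Submodule.map L) hspan
  rw [LinearMap.map_span, ← range_comp, hγ, Submodule.map_top] at hmap
  rw [hmap]
  simpa [L] using LinearMap.mem_range_self L (Pi.single ⟨k, hk⟩ 1)

lemma apply_eq_zero_of_mem_span {X ι : Type*} {γ : ι → X → ℂ} {x : X} (hx : ∀ i, γ i x = 0)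
    {f : X → ℂ} (hf : f ∈ Submodule.span ℂ (range γ)) : f x = 0 := by
  have hle : Submodule.span ℂ (range γ) ≤ LinearMap.ker (LinearMap.proj x) :=
    Submodule.span_le.2 (range_subset_iff.2 hx)
  exact hle hf

theorem stmt10_general (Λ Λ' : Finset (ℤ × ℤ)) (hΛ : Λ ⊆ Λ')
    (μ : ℝ × ℝ → ℂ) (c : ℤ × ℤ → ℂ) (hμrep : μ = trigSum Λ c)
    (R : ℕ) (hR : R = (shrink Λ' Λ).card)
    (cγ : Fin R → (ℤ × ℤ → ℂ)) (γ : Fin R → (ℝ × ℝ → ℂ))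
    (hγrep : ∀ i, γ i = trigSum (shrink Λ' Λ) (cγ i))
    (horth : ∀ i j, (∫ r in box, (μ r * γ i r) * (starRingEnd ℂ) (μ r * γ j r))
      = if i = j then 1 else 0) :
    {r : ℝ × ℝ | r ∈ box ∧ μ r ≠ 0 ∧ ∀ i, γ i r = 0}.Finite := by
  refine Set.finite_empty.subset fun r ⟨_, hμr, hγr⟩ => ?_
  have hne : Λ.Nonempty := Finset.nonempty_iff_ne_empty.2 fun h => by
    simp [hμrep, h, trigSum_empty] at hμr
  have hcont : ∀ i, Continuous fun r => μ r * γ i r := fun i => by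
    rw [hμrep, hγrep i]
    exact (continuous_trigSum _ _).mul (continuous_trigSum _ _)
  have hμγ : LinearIndependent ℂ fun i => μ * γ i :=
    linearIndependent_of_integral_mul_conj_eq_ite
      (fun i j => ((hcont i).mul (hcont j).star).continuousOn.integrableOn_compact isCompact_box)
      horth
  have hli : LinearIndependent ℂ γ := hμγ.of_comp (LinearMap.mulLeft ℂ μ)
  have hone := e2_mem_span_of_linearIndependent hγrep (by simp [hR]) hli (zero_mem_shrink hΛ hne)
  simpa [e2_zero] using apply_eq_zero_of_mem_span hγr hone

/-- Let `μ` be a trigonometric polynomial supported on `Λ ⊆ Λ'`, set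
`R = |Λ' ⊖ Λ|`, and let `γ₁, …, γ_R` be trigonometric polynomials supported in `Λ' ⊖ Λ`
such that the products `μγᵢ` are orthonormal in `L²([0,1]²)`. Then the set
`{r ∈ [0,1]² : μ(r) ≠ 0 ∧ γᵢ(r) = 0 ∀ i}` is finite. -/
theorem stmt10 (Λ Λ' : Finset (ℤ × ℤ)) (hΛ : Λ ⊆ Λ')
    (μ : ℝ × ℝ → ℂ) (c : ℤ × ℤ → ℂ) (hμrep : μ = trigSum Λ c) (hμ0 : μ ≠ 0)
    (R : ℕ) (hR : R = (shrink Λ' Λ).card)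
    (cγ : Fin R → (ℤ × ℤ → ℂ)) (γ : Fin R → (ℝ × ℝ → ℂ))
    (hγrep : ∀ i, γ i = trigSum (shrink Λ' Λ) (cγ i))
    (hγ0 : ∀ i, γ i ≠ 0)
    (horth : ∀ i j, (∫ r in box, (μ r * γ i r) * (starRingEnd ℂ) (μ r * γ j r))
      = if i = j then 1 else 0) :
    {r : ℝ × ℝ | r ∈ box ∧ μ r ≠ 0 ∧ ∀ i, γ i r = 0}.Finite :=
  stmt10_general Λ Λ' hΛ μ c hμrep R hR cγ γ hγrep horth
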